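/- arXiv:0907.3341 — 2 statements merged into one kernel-verified Lean document; each statement's English description precedes it below -/
import Mathlib

section
/- If H(K̃ | Z) ≥ log|G| − ε where K̃ is uniform on the finite abelian group G, K̃ and D̃ are conditionally independent given Z, then H(D̃ | D̃ ⊕ K̃, Z) ≥ H(D̃) − ε, provided D̃ is independent of Z. -/
open Finset

/-- Probability that the random variable `X` takes value `a`, under pmf `μ`. -/
noncomputable def prb {Ω α : Type*} [Fintype Ω] [DecidableEq α]
    (μ : Ω → ℝ) (X : Ω → α) (a : α) : ℝ :=
  ∑ ω : Ω, if X ω = a then μ ω else 0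

/-- Shannon entropy (base 2) of a random variable on a finite space. -/
noncomputable def ent {Ω α : Type*} [Fintype Ω] [Fintype α] [DecidableEq α]
    (μ : Ω → ℝ) (X : Ω → α) : ℝ :=
  (∑ a : α, Real.negMulLog (prb μ X a)) / Real.log 2

/-- Conditional entropy `H(X|Y) = H(X,Y) - H(Y)`. -/
noncomputable def condEnt {Ω α β : Type*} [Fintype Ω] [Fintype α] [Fintype β]
    [DecidableEq α] [DecidableEq β] (μ : Ω → ℝ) (X : Ω → α) (Y : Ω → β) : ℝ :=
  ent μ (fun ω => (X ω, Y ω)) - ent μ Y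

/-- Mutual information `I(X;Y) = H(X) + H(Y) - H(X,Y)`. -/
noncomputable def mutInfo {Ω α β : Type*} [Fintype Ω] [Fintype α] [Fintype β]
    [DecidableEq α] [DecidableEq β] (μ : Ω → ℝ) (X : Ω → α) (Y : Ω → β) : ℝ :=
  ent μ X + ent μ Y - ent μ (fun ω => (X ω, Y ω))

/-- Conditional mutual information `I(X;Y|Z) = H(X|Z) + H(Y|Z) - H(X,Y|Z)`. -/
noncomputable def condMutInfo {Ω α β γ : Type*} [Fintype Ω] [Fintype α] [Fintype β] [Fintype γ]
    [DecidableEq α] [DecidableEq β] [DecidableEq γ]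
    (μ : Ω → ℝ) (X : Ω → α) (Y : Ω → β) (Z : Ω → γ) : ℝ :=
  condEnt μ X Z + condEnt μ Y Z - condEnt μ (fun ω => (X ω, Y ω)) Z

/-- `μ` is a probability mass function on the finite space `Ω`. -/
def IsPMF {Ω : Type*} [Fintype Ω] (μ : Ω → ℝ) : Prop :=
  (∀ ω, 0 ≤ μ ω) ∧ ∑ ω : Ω, μ ω = 1

/-- `X` and `Y` are independent random variables under `μ`. -/
def IndepRV {Ω α β : Type*} [Fintype Ω] [DecidableEq α] [DecidableEq β]
    (μ : Ω → ℝ) (X : Ω → α) (Y : Ω → β) : Prop :=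
  ∀ a b, prb μ (fun ω => (X ω, Y ω)) (a, b) = prb μ X a * prb μ Y b

/-- `X` and `Y` are conditionally independent given `Z` under `μ`. -/
def CondIndepRV {Ω α β γ : Type*} [Fintype Ω] [DecidableEq α] [DecidableEq β] [DecidableEq γ]
    (μ : Ω → ℝ) (X : Ω → α) (Y : Ω → β) (Z : Ω → γ) : Prop :=
  ∀ a b c, prb μ (fun ω => (X ω, Y ω, Z ω)) (a, b, c) * prb μ Z c
    = prb μ (fun ω => (X ω, Z ω)) (a, c) * prb μ (fun ω => (Y ω, Z ω)) (b, c)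

/-- `K` is uniformly distributed on `G`. -/
def IsUniformRV {Ω G : Type*} [Fintype Ω] [Fintype G] [DecidableEq G]
    (μ : Ω → ℝ) (K : Ω → G) : Prop :=
  ∀ a : G, prb μ K a = 1 / (Fintype.card G : ℝ)

/-!
The shear `(k, d, z) ↦ (d, d + k, z)` is a bijection, so `H(D, D + K, Z) = H(K, D, Z)`.
Conditional independence of `K` and `D` given `Z`, followed by independence of `D` and `Z`, gives
`H(K, D, Z) = H(K | Z) + H(D) + H(Z)`, while `H(D + K, Z) ≤ log |G| + H(Z)` since `D + K` takes at
most `|G|` values. Subtracting, `H(D | D + K, Z) ≥ H(K | Z) + H(D) - log |G| ≥ H(D) - ε`.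
-/

open Real

section NegMulLog

variable {ι κ : Type*} [Fintype ι] [Fintype κ]

lemma sum_sum_negMulLog_mul (f : ι → ℝ) (g : κ → ℝ) :
    ∑ a, ∑ b, negMulLog (f a * g b)
      = (∑ a, negMulLog (f a)) * ∑ b, g b + (∑ a, f a) * ∑ b, negMulLog (g b) := by
  simp only [negMulLog_mul, sum_add_distrib, ← mul_sum, ← sum_mul]
  ring

/-- `h`, `f`, `g` are the masses of `(X, Y)`, `X`, `Y` on a fibre `Z = c` of mass `s`;
independence is the case `s = 1`. -/
lemma sum_sum_negMulLog_add_negMulLog_of_mul_eq {f : ι → ℝ} {g : κ → ℝ} {h : ι → κ → ℝ} {s : ℝ}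
    (hs : s ≠ 0) (hf : ∑ a, f a = s) (hg : ∑ b, g b = s)
    (hfac : ∀ a b, h a b * s = f a * g b) :
    ∑ a, ∑ b, negMulLog (h a b) + negMulLog s
      = ∑ a, negMulLog (f a) + ∑ b, negMulLog (g b) := by
  have hh : ∀ a b, h a b = f a * (g b * s⁻¹) := fun a b => by
    rw [← mul_assoc, ← hfac, mul_inv_cancel_right₀ hs]
  have hg' : ∑ b, negMulLog (g b * s⁻¹) = s⁻¹ * ∑ b, negMulLog (g b) + log s := by
    rw [sum_congr rfl fun b _ => negMulLog_mul (g b) s⁻¹, sum_add_distrib, ← mul_sum, ← sum_mul,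
      hg, negMulLog, log_inv]
    field_simp
  have hg1 : ∑ b, g b * s⁻¹ = 1 := by rw [← sum_mul, hg, mul_inv_cancel₀ hs]
  simp only [hh]
  rw [sum_sum_negMulLog_mul, hg1, hf, hg', negMulLog]
  field_simp
  ring

lemma sum_negMulLog_le {f : ι → ℝ} (hf : ∀ i, 0 ≤ f i) :
    ∑ i, negMulLog (f i) ≤ (∑ i, f i) * log (Fintype.card ι) + negMulLog (∑ i, f i) := by
  cases isEmpty_or_nonempty ι
  · simp
  set n : ℝ := (Fintype.card ι : ℝ)
  have hn : 0 < n := by simp [n, Fintype.card_pos]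
  have jensen : ∑ i, n⁻¹ • negMulLog (f i) ≤ negMulLog (∑ i, n⁻¹ • f i) :=
    concaveOn_negMulLog.le_map_sum (fun _ _ => by positivity) (by simp [n]) (fun i _ => hf i)
  have hinv : negMulLog n⁻¹ = n⁻¹ * log n := by simp [negMulLog, log_inv]
  simp only [smul_eq_mul, ← mul_sum, negMulLog_mul, hinv] at jensen
  have := mul_le_mul_of_nonneg_left jensen hn.le
  field_simp at this ⊢
  linarith

end NegMulLog

section Probability

variable {Ω α β γ : Type*} [Fintype Ω] [DecidableEq α] [DecidableEq β] [DecidableEq γ]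
  (μ : Ω → ℝ)

lemma prb_nonneg (hμ : ∀ ω, 0 ≤ μ ω) (X : Ω → α) (a : α) : 0 ≤ prb μ X a :=
  sum_nonneg fun ω _ => by split_ifs <;> simp [hμ ω]

lemma sum_prb [Fintype α] (X : Ω → α) : ∑ a, prb μ X a = ∑ ω, μ ω := by
  unfold prb
  rw [sum_comm]
  simp

lemma sum_prb_pair [Fintype α] (X : Ω → α) (Y : Ω → β) (b : β) :
    ∑ a, prb μ (fun ω => (X ω, Y ω)) (a, b) = prb μ Y b := by
  unfold prb
  rw [sum_comm]
  refine sum_congr rfl fun ω _ => ?_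
  by_cases h : Y ω = b <;> simp [h]

lemma prb_pair_eq_zero [Fintype α] (hμ : ∀ ω, 0 ≤ μ ω) (X : Ω → α) {Y : Ω → β} {b : β}
    (hb : prb μ Y b = 0) (a : α) : prb μ (fun ω => (X ω, Y ω)) (a, b) = 0 := by
  rw [← sum_prb_pair μ X Y b] at hb
  exact (sum_eq_zero_iff_of_nonneg fun _ _ => prb_nonneg μ hμ _ _).1 hb a (mem_univ a)

lemma ent_comp_equiv [Fintype α] [Fintype β] (e : α ≃ β) (X : Ω → α) :
    ent μ (fun ω => e (X ω)) = ent μ X := by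
  have hprb : ∀ b, prb μ (fun ω => e (X ω)) b = prb μ X (e.symm b) := fun b => by
    simp only [prb, ← Equiv.eq_symm_apply]
  simp only [ent, hprb, Equiv.sum_comp e.symm (fun a => negMulLog (prb μ X a))]

lemma ent_pair [Fintype α] [Fintype β] (X : Ω → α) (Y : Ω → β) :
    ent μ (fun ω => (X ω, Y ω))
      = (∑ b, ∑ a, negMulLog (prb μ (fun ω => (X ω, Y ω)) (a, b))) / log 2 := by
  rw [ent, Fintype.sum_prod_type_right]

lemma ent_pair_of_indepRV [Fintype α] [Fintype β] (hμ : IsPMF μ) {X : Ω → α} {Y : Ω → β}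
    (h : IndepRV μ X Y) : ent μ (fun ω => (X ω, Y ω)) = ent μ X + ent μ Y := by
  have key := sum_sum_negMulLog_add_negMulLog_of_mul_eq one_ne_zero
    ((sum_prb μ X).trans hμ.2) ((sum_prb μ Y).trans hμ.2)
    (fun a b => (mul_one _).trans (h a b))
  rw [negMulLog_one, add_zero] at key
  rw [ent, Fintype.sum_prod_type, key, add_div, ent, ent]

lemma ent_triple_add_ent_of_condIndepRV [Fintype α] [Fintype β] [Fintype γ]
    (hμ : ∀ ω, 0 ≤ μ ω) {X : Ω → α} {Y : Ω → β} {Z : Ω → γ} (h : CondIndepRV μ X Y Z) :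
    ent μ (fun ω => (X ω, Y ω, Z ω)) + ent μ Z
      = ent μ (fun ω => (X ω, Z ω)) + ent μ (fun ω => (Y ω, Z ω)) := by
  have htriple : ∑ p : α × β × γ, negMulLog (prb μ (fun ω => (X ω, Y ω, Z ω)) p)
      = ∑ c, ∑ a, ∑ b, negMulLog (prb μ (fun ω => (X ω, Y ω, Z ω)) (a, b, c)) := by
    rw [Fintype.sum_prod_type]
    simp only [Fintype.sum_prod_type_right]
    exact sum_comm
  rw [ent_pair μ X Z, ent_pair μ Y Z]
  unfold ent
  rw [htriple, ← add_div, ← add_div, ← sum_add_distrib, ← sum_add_distrib]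
  congr 1
  refine sum_congr rfl fun c _ => ?_
  by_cases hc : prb μ Z c = 0
  · have hYZ := prb_pair_eq_zero μ hμ Y hc
    simp [hc, hYZ, prb_pair_eq_zero μ hμ X hc,
      prb_pair_eq_zero μ hμ X (Y := fun ω => (Y ω, Z ω)) (hYZ _)]
  · exact sum_sum_negMulLog_add_negMulLog_of_mul_eq hc (sum_prb_pair μ X Z c)
      (sum_prb_pair μ Y Z c) (fun a b => h a b c)

lemma ent_pair_le_logb_card_add [Fintype α] [Fintype β] (hμ : IsPMF μ) (X : Ω → α)
    (Y : Ω → β) : ent μ (fun ω => (X ω, Y ω)) ≤ logb 2 (Fintype.card α) + ent μ Y := by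
  have hfiber : ∀ b, ∑ a, negMulLog (prb μ (fun ω => (X ω, Y ω)) (a, b))
      ≤ prb μ Y b * log (Fintype.card α) + negMulLog (prb μ Y b) := fun b => by
    simpa only [sum_prb_pair] using
      sum_negMulLog_le fun a => prb_nonneg μ hμ.1 (fun ω => (X ω, Y ω)) (a, b)
  have hsum := sum_le_sum fun b (_ : b ∈ univ) => hfiber b
  rw [sum_add_distrib, ← sum_mul, sum_prb, hμ.2, one_mul] at hsum
  rw [ent_pair, ent, logb, ← add_div]
  exact div_le_div_of_nonneg_right hsum (log_nonneg one_le_two)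

end Probability

def shearEquiv (G γ : Type*) [AddCommGroup G] : G × G × γ ≃ G × G × γ where
  toFun p := (p.2.1, p.2.1 + p.1, p.2.2)
  invFun p := (p.2.1 - p.1, p.1, p.2.2)
  left_inv p := by simp
  right_inv p := by simp

theorem otp_almost_secret_key_general
    {Ω G γ : Type*} [Fintype Ω] [Fintype G] [DecidableEq G] [AddCommGroup G]
    [Fintype γ] [DecidableEq γ]
    (μ : Ω → ℝ) (D K : Ω → G) (Z : Ω → γ) (ε : ℝ)
    (hμ : IsPMF μ)
    (hci : CondIndepRV μ K D Z) (hDZ : IndepRV μ D Z)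
    (hkey : condEnt μ K Z ≥ Real.logb 2 (Fintype.card G) - ε) :
    condEnt μ D (fun ω => (D ω + K ω, Z ω)) ≥ ent μ D - ε := by
  have hshear : ent μ (fun ω => (D ω, D ω + K ω, Z ω)) = ent μ (fun ω => (K ω, D ω, Z ω)) :=
    ent_comp_equiv μ (shearEquiv G γ) fun ω => (K ω, D ω, Z ω)
  have hcond := ent_triple_add_ent_of_condIndepRV μ hμ.1 hci
  have hindep := ent_pair_of_indepRV μ hμ hDZ
  have hbound := ent_pair_le_logb_card_add μ hμ (fun ω => D ω + K ω) Z
  unfold condEnt at hkey ⊢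
  linarith

/-- Almost-secret key yields almost-perfect one-time-pad secrecy:
if `H(K̃|Z) ≥ log|G| - ε`, `K̃` uniform on `G`, `K̃ ⫫ D̃ | Z`, and `D̃ ⫫ Z`, then
`H(D̃ | D̃ ⊕ K̃, Z) ≥ H(D̃) - ε`. -/
theorem otp_almost_secret_key
    {Ω G γ : Type*} [Fintype Ω] [Fintype G] [DecidableEq G] [AddCommGroup G]
    [Fintype γ] [DecidableEq γ]
    (μ : Ω → ℝ) (D K : Ω → G) (Z : Ω → γ) (ε : ℝ)
    (hμ : IsPMF μ) (hε : 0 ≤ ε) (hKunif : IsUniformRV μ K)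
    (hci : CondIndepRV μ K D Z) (hDZ : IndepRV μ D Z)
    (hkey : condEnt μ K Z ≥ Real.logb 2 (Fintype.card G) - ε) :
    condEnt μ D (fun ω => (D ω + K ω, Z ω)) ≥ ent μ D - ε :=
  otp_almost_secret_key_general μ D K Z ε hμ hci hDZ hkey
end

section
/- Let h_m, h_e be positive random variables with E[1/min(h_m, h_e)] < ∞ and E[(log(h_m/h_e))⁺] < ∞. Define P_c(h) = c/min(h_m, h_e). Then as c → ∞, E[(log(1 + P_c h_m) − log(1 + P_c h_e))⁺] → E[(log(h_m/h_e))⁺]. -/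
open MeasureTheory Filter ProbabilityTheory

/-- High-SNR limit of the channel-inversion scheme (key limit in Lemma 1): for positive
random channel gains with `E[1/min(h_m,h_e)] < ∞` and `E[(log(h_m/h_e))⁺] < ∞`, the expected
positive-part rate difference under `P_c = c / min(h_m,h_e)` converges, as `c → ∞`, to
`E[(log(h_m/h_e))⁺]`. -/
theorem high_snr_limit {Ω : Type*} [MeasureSpace Ω] [IsProbabilityMeasure (ℙ : Measure Ω)]
    (hm he : Ω → ℝ) (hmm : Measurable hm) (hme : Measurable he)
    (hposm : ∀ ω, 0 < hm ω) (hpose : ∀ ω, 0 < he ω)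
    (hint1 : Integrable (fun ω => 1 / min (hm ω) (he ω)))
    (hint2 : Integrable (fun ω => max (Real.logb 2 (hm ω / he ω)) 0)) :
    Tendsto (fun c : ℝ =>
        ∫ ω, max (Real.logb 2 (1 + (c / min (hm ω) (he ω)) * hm ω)
                - Real.logb 2 (1 + (c / min (hm ω) (he ω)) * he ω)) 0)
      atTop (nhds (∫ ω, max (Real.logb 2 (hm ω / he ω)) 0)) := by
  refine tendsto_integral_filter_of_dominated_convergence
    (fun ω => max (Real.logb 2 (hm ω / he ω)) 0) ?_ ?_ hint2 ?_
  · filter_upwards with c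
    apply Measurable.aestronglyMeasurable
    apply Measurable.max _ measurable_const
    apply Measurable.sub <;>
    · unfold Real.logb
      apply Measurable.div _ measurable_const
      apply Real.measurable_log.comp
      fun_prop
  · filter_upwards [eventually_gt_atTop (0:ℝ)] with c hc
    filter_upwards with ω
    have hmpos : 0 < min (hm ω) (he ω) := lt_min (hposm ω) (hpose ω)
    have hP : 0 < c / min (hm ω) (he ω) := div_pos hc hmpos
    set P := c / min (hm ω) (he ω) with hPdef
    have h1 : (0:ℝ) < 1 + P * hm ω := by nlinarith [hposm ω]
    have h2 : (0:ℝ) < 1 + P * he ω := by nlinarith [hpose ω]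
    rw [Real.norm_eq_abs, abs_of_nonneg (le_max_right _ _)]
    apply max_le _ (le_max_right _ _)
    rcases le_total (he ω) (hm ω) with h | h
    · have key : Real.logb 2 (1 + P * hm ω) - Real.logb 2 (1 + P * he ω)
          ≤ Real.logb 2 (hm ω / he ω) := by
        rw [← Real.logb_div h1.ne' h2.ne']
        apply Real.logb_le_logb_of_le one_lt_two (by positivity)
        rw [div_le_div_iff₀ h2 (hpose ω)]
        nlinarith
      exact le_trans key (le_max_left _ _)
    · have key : Real.logb 2 (1 + P * hm ω) - Real.logb 2 (1 + P * he ω) ≤ 0 := by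
        apply sub_nonpos.mpr
        apply Real.logb_le_logb_of_le one_lt_two h1
        nlinarith
      exact le_trans key (le_max_right _ _)
  · filter_upwards with ω
    have hmpos : 0 < min (hm ω) (he ω) := lt_min (hposm ω) (hpose ω)
    have ha := hposm ω
    have hb := hpose ω
    have htdiv : Tendsto (fun c : ℝ => c / min (hm ω) (he ω)) atTop atTop :=
      tendsto_id.atTop_div_const hmpos
    have hratio : Tendsto (fun t : ℝ => (1 + t * hm ω) / (1 + t * he ω)) atTop
        (nhds (hm ω / he ω)) := by
      have h0 : Tendsto (fun t : ℝ => (t⁻¹ + hm ω) / (t⁻¹ + he ω)) atTop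
          (nhds ((0 + hm ω) / (0 + he ω))) := by
        exact (Tendsto.add tendsto_inv_atTop_zero tendsto_const_nhds).div
          (Tendsto.add tendsto_inv_atTop_zero tendsto_const_nhds) (by simp [hb.ne'])
      rw [zero_add, zero_add] at h0
      refine Tendsto.congr' ?_ h0
      filter_upwards [eventually_gt_atTop (0:ℝ)] with t ht
      field_simp
    have hlog : Tendsto (fun c : ℝ =>
        Real.logb 2 (1 + (c / min (hm ω) (he ω)) * hm ω)
          - Real.logb 2 (1 + (c / min (hm ω) (he ω)) * he ω)) atTop
        (nhds (Real.logb 2 (hm ω / he ω))) := by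
      have hcont : ContinuousAt (Real.logb 2) (hm ω / he ω) :=
        Real.continuousAt_logb (by positivity)
      have := hcont.tendsto.comp (hratio.comp htdiv)
      refine Tendsto.congr' ?_ this
      filter_upwards [eventually_gt_atTop (0:ℝ)] with c hc
      have hP : 0 < c / min (hm ω) (he ω) := div_pos hc hmpos
      set P := c / min (hm ω) (he ω)
      have h1 : (0:ℝ) < 1 + P * hm ω := by nlinarith
      have h2 : (0:ℝ) < 1 + P * he ω := by nlinarith
      simp only [Function.comp]
      rw [Real.logb_div h1.ne' h2.ne']
    exact hlog.max tendsto_const_nhds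
end
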